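/- Let k ≥ 0 and consider S = Q[x,y]. The derivations θ_1 = x^{2k+1} ∂_x + y^{2k+1} ∂_y and θ_2 = (x^2 y^{2k+1} − y^{2k+3}) ∂_y satisfy: θ_i(x) is divisible by x^{2k+1}, θ_i(y) is divisible by y^{2k+1}, θ_i(x+y) is divisible by (x+y), and θ_i(x−y) is divisible by (x−y), for i = 1,2. The determinant of their coefficient matrix equals (x−y)(x+y) x^{2k+1} y^{2k+1}. Hence the multiarrangement with defining polynomial x^{2k+1} y^{2k+1} (x+y)(x−y) is free with exponents (2k+1, 2k+3). -/

import Mathlib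

noncomputable section
open MvPolynomial

/-- polynomial ring in two variables `x, y` -/
abbrev S₂ : Type := MvPolynomial (Fin 2) ℚ

def px : S₂ := X 0
def py : S₂ := X 1

/-- The module of multiderivations of the rank-2 multiarrangement with defining
polynomial `x^a y^b (x+y)^c (x-y)^d`, where a derivation `θ` is recorded by the
pair `(θ(x), θ(y))`. -/
def Dmulti (a b c d : ℕ) : Set (S₂ × S₂) :=
  {θ | px ^ a ∣ θ.1 ∧ py ^ b ∣ θ.2 ∧ (px + py) ^ c ∣ (θ.1 + θ.2) ∧
    (px - py) ^ d ∣ (θ.1 - θ.2)}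

/-!
Both derivations lie in `D(A, μ)` since `x + y ∣ x^n + y^n` for odd `n` and `x - y ∣ x^n - y^n`;
their determinant `(x - y)(x + y) x^n y^n` is nonzero, which gives independence. For generation
write `θ(x) = x^n f`: then `θ(y) - y^n f` is divisible by `y^n`, `x + y` and `x - y`, hence, these
being powers of pairwise non-associate primes, by `y^n (x + y)(x - y)`, the second coordinate
of `θ₂`.
-/

section Linear

variable {R : Type*} [CommRing R] [IsDomain R]

theorem MvPolynomial.prime_X_zero_add_C_mul_X_one (c : R) :
    Prime (X 0 + C c * X 1 : MvPolynomial (Fin 2) R) := by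
  refine (MulEquiv.prime_iff (finSuccEquiv R 1).toMulEquiv).mp ?_
  have hmap :
      finSuccEquiv R 1 (X 0 + C c * X 1) = Polynomial.X - Polynomial.C (-(C c * X 0)) := by
    rw [map_add, map_mul, finSuccEquiv_X_zero, show (1 : Fin 2) = Fin.succ 0 from rfl,
      finSuccEquiv_X_succ, ← algebraMap_eq, AlgEquiv.commutes]
    simp [Polynomial.algebraMap_apply, algebraMap_eq]
  exact hmap ▸ Polynomial.prime_X_sub_C _

theorem eq_zero_of_smul_add_smul_eq_zero {u v : R × R} (hdet : u.1 * v.2 - u.2 * v.1 ≠ 0)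
    {f g : R} (h : f • u + g • v = 0) : f = 0 ∧ g = 0 := by
  have h₁ : f * u.1 + g * v.1 = 0 := congrArg Prod.fst h
  have h₂ : f * u.2 + g * v.2 = 0 := congrArg Prod.snd h
  have hf : f * (u.1 * v.2 - u.2 * v.1) = 0 := by linear_combination v.2 * h₁ - v.1 * h₂
  have hg : g * (u.1 * v.2 - u.2 * v.1) = 0 := by linear_combination u.1 * h₂ - u.2 * h₁
  exact ⟨(mul_eq_zero.mp hf).resolve_right hdet, (mul_eq_zero.mp hg).resolve_right hdet⟩

end Linear

theorem Prime.mul_dvd_of_not_dvd {M : Type*} [CommMonoidWithZero M] [IsCancelMulZero M]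
    {p a c : M}
    (hp : Prime p) (hpa : ¬p ∣ a) (ha : a ∣ c) (hp_dvd : p ∣ c) : a * p ∣ c :=
  (hp.irreducible.isRelPrime_iff_not_dvd.2 hpa).symm.mul_dvd_of_right_isPrimal ha hp_dvd hp.isPrimal

theorem MvPolynomial.not_dvd_of_eval_eq_zero {σ R : Type*} [CommRing R] {p q : MvPolynomial σ R}
    (v : σ → R) (hp : eval v p = 0) (hq : eval v q ≠ 0) : ¬p ∣ q := fun h =>
  hq (zero_dvd_iff.mp (hp ▸ map_dvd (eval v) h))

theorem prime_px_add_py : Prime (px + py) := by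
  simpa [px, py] using prime_X_zero_add_C_mul_X_one (1 : ℚ)

theorem prime_px_sub_py : Prime (px - py) := by
  simpa [px, py, sub_eq_add_neg] using prime_X_zero_add_C_mul_X_one (-1 : ℚ)

theorem px_add_py_not_dvd_py : ¬(px + py) ∣ py :=
  not_dvd_of_eval_eq_zero ![1, -1] (by simp [px, py]) (by simp [py])

theorem px_sub_py_not_dvd_py : ¬(px - py) ∣ py :=
  not_dvd_of_eval_eq_zero ![1, 1] (by simp [px, py]) (by simp [py])

theorem px_sub_py_not_dvd_px_add_py : ¬(px - py) ∣ px + py :=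
  not_dvd_of_eval_eq_zero ![1, 1] (by simp [px, py]) (by norm_num [px, py])

section Derivations

variable {n : ℕ}

theorem px_sq_mul_py_pow_sub_py_pow (n : ℕ) :
    px ^ 2 * py ^ n - py ^ (n + 2) = py ^ n * (px + py) * (px - py) := by
  ring

theorem mem_Dmulti_pow (hn : Odd n) : (px ^ n, py ^ n) ∈ Dmulti n n 1 1 :=
  ⟨dvd_rfl, dvd_rfl, by simpa using hn.add_dvd_pow_add_pow px py,
    by simpa using sub_dvd_pow_sub_pow px py n⟩

theorem mem_Dmulti_zero_pow (n : ℕ) :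
    ((0 : S₂), px ^ 2 * py ^ n - py ^ (n + 2)) ∈ Dmulti n n 1 1 := by
  simp only [Dmulti, Set.mem_ofPred_eq, px_sq_mul_py_pow_sub_py_pow, pow_one, zero_add, zero_sub,
    dvd_neg]
  exact ⟨dvd_zero _, by rw [mul_assoc]; exact dvd_mul_right _ _,
    dvd_mul_of_dvd_left (dvd_mul_left _ _) _, dvd_mul_left _ _⟩

theorem py_pow_mul_px_add_py_mul_px_sub_py_dvd {r : S₂} (hy : py ^ n ∣ r) (hplus : px + py ∣ r)
    (hminus : px - py ∣ r) : py ^ n * (px + py) * (px - py) ∣ r := by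
  have hplus_y : ¬(px + py) ∣ py ^ n := fun h =>
    px_add_py_not_dvd_py (prime_px_add_py.dvd_of_dvd_pow h)
  have hminus_y : ¬(px - py) ∣ py ^ n := fun h =>
    px_sub_py_not_dvd_py (prime_px_sub_py.dvd_of_dvd_pow h)
  exact prime_px_sub_py.mul_dvd_of_not_dvd
    (prime_px_sub_py.not_dvd_mul hminus_y px_sub_py_not_dvd_px_add_py)
    (prime_px_add_py.mul_dvd_of_not_dvd hplus_y hy hplus) hminus

theorem exists_eq_smul_add_smul_of_mem_Dmulti (hn : Odd n) {θ : S₂ × S₂}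
    (hθ : θ ∈ Dmulti n n 1 1) :
    ∃ f g : S₂, θ = f • (px ^ n, py ^ n) + g • ((0 : S₂), px ^ 2 * py ^ n - py ^ (n + 2)) := by
  obtain ⟨⟨f, hf⟩, hy, hplus, hminus⟩ := hθ
  rw [pow_one] at hplus hminus
  have hplus' : px + py ∣ θ.2 - py ^ n * f := by
    convert dvd_sub hplus ((hn.add_dvd_pow_add_pow px py).mul_right f) using 1
    linear_combination -hf
  have hminus' : px - py ∣ θ.2 - py ^ n * f := by
    convert dvd_sub ((sub_dvd_pow_sub_pow px py n).mul_right f) hminus using 1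
    linear_combination hf
  obtain ⟨g, hg⟩ := py_pow_mul_px_add_py_mul_px_sub_py_dvd
    (dvd_sub hy (dvd_mul_right _ _)) hplus' hminus'
  refine ⟨f, g, Prod.ext ?_ ?_⟩
  · simp only [Prod.fst_add, Prod.smul_fst, smul_eq_mul, mul_zero, add_zero, hf, mul_comm]
  · simp only [Prod.snd_add, Prod.smul_snd, smul_eq_mul, px_sq_mul_py_pow_sub_py_pow]
    linear_combination hg

end Derivations

theorem stmt5 (k : ℕ) :
    let θ₁ : S₂ × S₂ := (px ^ (2 * k + 1), py ^ (2 * k + 1))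
    let θ₂ : S₂ × S₂ := (0, px ^ 2 * py ^ (2 * k + 1) - py ^ (2 * k + 3))
    θ₁ ∈ Dmulti (2 * k + 1) (2 * k + 1) 1 1 ∧
    θ₂ ∈ Dmulti (2 * k + 1) (2 * k + 1) 1 1 ∧
    θ₁.1 * θ₂.2 - θ₁.2 * θ₂.1 =
      (px - py) * (px + py) * px ^ (2 * k + 1) * py ^ (2 * k + 1) ∧
    (∀ θ ∈ Dmulti (2 * k + 1) (2 * k + 1) 1 1, ∃ f g : S₂, θ = f • θ₁ + g • θ₂) ∧
    (∀ f g : S₂, f • θ₁ + g • θ₂ = 0 → f = 0 ∧ g = 0) := by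
  intro θ₁ θ₂
  have hodd : Odd (2 * k + 1) := odd_two_mul_add_one k
  have hdet : θ₁.1 * θ₂.2 - θ₁.2 * θ₂.1 =
      (px - py) * (px + py) * px ^ (2 * k + 1) * py ^ (2 * k + 1) := by
    simp only [θ₁, θ₂]
    ring
  refine ⟨mem_Dmulti_pow hodd, mem_Dmulti_zero_pow _, hdet,
    fun θ hθ => exists_eq_smul_add_smul_of_mem_Dmulti hodd hθ, fun f g h => ?_⟩
  refine eq_zero_of_smul_add_smul_eq_zero ?_ h
  rw [hdet]
  exact mul_ne_zero (mul_ne_zero (mul_ne_zero prime_px_sub_py.ne_zero prime_px_add_py.ne_zero)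
    (pow_ne_zero _ (X_ne_zero 0))) (pow_ne_zero _ (X_ne_zero 1))

end
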